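/- Let C be a bivariate copula and F₁, F₂ cumulative distribution functions on ℝ. Then H(x,y) = C(F₁(x), F₂(y)) is a bivariate cumulative distribution function with margins F₁ and F₂; in particular, lim_{y→∞} H(x,y) = F₁(x), lim_{x→∞} H(x,y) = F₂(y), and H is 2-increasing. -/

import Mathlib

open Set Filter Topology

/-! A copula's sections `v ↦ C u v` are monotone and 1-Lipschitz on `[0, 1]`: this follows from
2-increasingness on the rectangles `[0, u] × [a, b]` and `[u, 1] × [a, b]` together with the
boundary values `C 0 v = 0` and `C 1 v = v`. Hence `C (F₁ x) (F₂ y) → C (F₁ x) 1 = F₁ x` as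
`F₂ y → 1`, and symmetrically in the other variable. The 2-increasing property of `H` is that of
`C`, read at the ordered points `F₁ x₁ ≤ F₁ x₂` and `F₂ y₁ ≤ F₂ y₂`. -/

def TwoIncreasingOn (C : ℝ → ℝ → ℝ) (s : Set ℝ) : Prop :=
  ∀ a₁ ∈ s, ∀ b₁ ∈ s, ∀ a₂ ∈ s, ∀ b₂ ∈ s, a₁ ≤ b₁ → a₂ ≤ b₂ →
    0 ≤ C b₁ b₂ - C a₁ b₂ - C b₁ a₂ + C a₁ a₂

namespace TwoIncreasingOn

variable {C : ℝ → ℝ → ℝ}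

theorem flip {s : Set ℝ} (hC : TwoIncreasingOn C s) : TwoIncreasingOn (_root_.flip C) s := by
  intro a₁ ha₁ b₁ hb₁ a₂ ha₂ b₂ hb₂ hab₁ hab₂
  have := hC a₂ ha₂ b₂ hb₂ a₁ ha₁ b₁ hb₁ hab₂ hab₁
  simp only [_root_.flip]
  linarith

theorem monotoneOn_right (hC : TwoIncreasingOn C (Icc 0 1))
    (hground : ∀ v ∈ Icc (0 : ℝ) 1, C 0 v = 0) {u : ℝ} (hu : u ∈ Icc 0 1) :
    MonotoneOn (C u) (Icc 0 1) := fun a ha b hb hab => by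
  have := hC 0 ⟨le_rfl, zero_le_one⟩ u hu a ha b hb hu.1 hab
  rw [hground a ha, hground b hb] at this
  linarith

theorem sub_le_sub_of_le_right (hC : TwoIncreasingOn C (Icc 0 1))
    (hmarg : ∀ v ∈ Icc (0 : ℝ) 1, C 1 v = v) {u a b : ℝ}
    (hu : u ∈ Icc 0 1) (ha : a ∈ Icc 0 1) (hb : b ∈ Icc 0 1) (hab : a ≤ b) :
    C u b - C u a ≤ b - a := by
  have := hC u hu 1 ⟨zero_le_one, le_rfl⟩ a ha b hb hu.2 hab
  rw [hmarg a ha, hmarg b hb] at this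
  linarith

theorem lipschitzOnWith_right (hC : TwoIncreasingOn C (Icc 0 1))
    (hground : ∀ v ∈ Icc (0 : ℝ) 1, C 0 v = 0) (hmarg : ∀ v ∈ Icc (0 : ℝ) 1, C 1 v = v)
    {u : ℝ} (hu : u ∈ Icc 0 1) :
    LipschitzOnWith 1 (C u) (Icc 0 1) := by
  refine LipschitzOnWith.of_le_add fun a ha b hb => ?_
  rcases le_total a b with hab | hba
  · linarith [hC.monotoneOn_right hground hu ha hb hab, dist_nonneg (x := a) (y := b)]
  · have := hC.sub_le_sub_of_le_right hmarg hu hb ha hba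
    rw [Real.dist_eq, abs_of_nonneg (sub_nonneg.mpr hba)]
    linarith

theorem tendsto_right (hC : TwoIncreasingOn C (Icc 0 1))
    (hground : ∀ v ∈ Icc (0 : ℝ) 1, C 0 v = 0) (hmarg : ∀ v ∈ Icc (0 : ℝ) 1, C 1 v = v)
    {α : Type*} {l : Filter α} {F : α → ℝ} {u : ℝ} (hu : u ∈ Icc 0 1)
    (hF : Tendsto F l (𝓝 1)) (hFrange : ∀ x, F x ∈ Icc 0 1) :
    Tendsto (fun x => C u (F x)) l (𝓝 (C u 1)) := by
  have hcont := (hC.lipschitzOnWith_right hground hmarg hu).continuousOn 1 ⟨zero_le_one, le_rfl⟩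
  exact hcont.tendsto.comp (tendsto_nhdsWithin_iff.mpr ⟨hF, Eventually.of_forall hFrange⟩)

end TwoIncreasingOn

theorem sklar_converse_general (C : ℝ → ℝ → ℝ)
    (hmarg₁ : ∀ u ∈ Icc (0 : ℝ) 1, C u 1 = u)
    (hmarg₂ : ∀ v ∈ Icc (0 : ℝ) 1, C 1 v = v)
    (hground₁ : ∀ u ∈ Icc (0 : ℝ) 1, C u 0 = 0)
    (hground₂ : ∀ v ∈ Icc (0 : ℝ) 1, C 0 v = 0)
    (hincr : ∀ a₁ ∈ Icc (0 : ℝ) 1, ∀ b₁ ∈ Icc (0 : ℝ) 1, ∀ a₂ ∈ Icc (0 : ℝ) 1,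
      ∀ b₂ ∈ Icc (0 : ℝ) 1, a₁ ≤ b₁ → a₂ ≤ b₂ →
        0 ≤ C b₁ b₂ - C a₁ b₂ - C b₁ a₂ + C a₁ a₂)
    (F₁ F₂ : ℝ → ℝ)
    (hF₁mono : Monotone F₁) (hF₂mono : Monotone F₂)
    (hF₁range : ∀ x, F₁ x ∈ Icc (0 : ℝ) 1) (hF₂range : ∀ y, F₂ y ∈ Icc (0 : ℝ) 1)
    (hF₁top : Tendsto F₁ atTop (nhds 1))
    (hF₂top : Tendsto F₂ atTop (nhds 1)) :
    (∀ x, Tendsto (fun y => C (F₁ x) (F₂ y)) atTop (nhds (F₁ x))) ∧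
    (∀ y, Tendsto (fun x => C (F₁ x) (F₂ y)) atTop (nhds (F₂ y))) ∧
    (∀ x₁ x₂ y₁ y₂ : ℝ, x₁ ≤ x₂ → y₁ ≤ y₂ →
      0 ≤ C (F₁ x₂) (F₂ y₂) - C (F₁ x₁) (F₂ y₂) - C (F₁ x₂) (F₂ y₁)
          + C (F₁ x₁) (F₂ y₁)) := by
  have hC : TwoIncreasingOn C (Icc 0 1) := hincr
  refine ⟨fun x => ?_, fun y => ?_, fun x₁ x₂ y₁ y₂ hx hy => ?_⟩
  · simpa only [hmarg₁ _ (hF₁range x)] using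
      hC.tendsto_right hground₂ hmarg₂ (hF₁range x) hF₂top hF₂range
  · simpa only [flip, hmarg₂ _ (hF₂range y)] using
      hC.flip.tendsto_right hground₁ hmarg₁ (hF₂range y) hF₁top hF₁range
  · exact hC _ (hF₁range x₁) _ (hF₁range x₂) _ (hF₂range y₁) _ (hF₂range y₂)
      (hF₁mono hx) (hF₂mono hy)

/-- Converse direction of Sklar's theorem: if `C` is a bivariate copula and
`F₁, F₂` are CDFs, then `H(x,y) = C (F₁ x) (F₂ y)` is a bivariate distribution
function with margins `F₁` and `F₂`: its limit in `y` is `F₁ x`, its limit in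
`x` is `F₂ y`, and it is 2-increasing. -/
theorem sklar_converse (C : ℝ → ℝ → ℝ)
    (hmarg₁ : ∀ u ∈ Icc (0 : ℝ) 1, C u 1 = u)
    (hmarg₂ : ∀ v ∈ Icc (0 : ℝ) 1, C 1 v = v)
    (hground₁ : ∀ u ∈ Icc (0 : ℝ) 1, C u 0 = 0)
    (hground₂ : ∀ v ∈ Icc (0 : ℝ) 1, C 0 v = 0)
    (hincr : ∀ a₁ ∈ Icc (0 : ℝ) 1, ∀ b₁ ∈ Icc (0 : ℝ) 1, ∀ a₂ ∈ Icc (0 : ℝ) 1,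
      ∀ b₂ ∈ Icc (0 : ℝ) 1, a₁ ≤ b₁ → a₂ ≤ b₂ →
        0 ≤ C b₁ b₂ - C a₁ b₂ - C b₁ a₂ + C a₁ a₂)
    (F₁ F₂ : ℝ → ℝ)
    (hF₁mono : Monotone F₁) (hF₂mono : Monotone F₂)
    (hF₁range : ∀ x, F₁ x ∈ Icc (0 : ℝ) 1) (hF₂range : ∀ y, F₂ y ∈ Icc (0 : ℝ) 1)
    (hF₁rc : ∀ x, ContinuousWithinAt F₁ (Ici x) x)
    (hF₂rc : ∀ y, ContinuousWithinAt F₂ (Ici y) y)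
    (hF₁top : Tendsto F₁ atTop (nhds 1)) (hF₁bot : Tendsto F₁ atBot (nhds 0))
    (hF₂top : Tendsto F₂ atTop (nhds 1)) (hF₂bot : Tendsto F₂ atBot (nhds 0)) :
    (∀ x, Tendsto (fun y => C (F₁ x) (F₂ y)) atTop (nhds (F₁ x))) ∧
    (∀ y, Tendsto (fun x => C (F₁ x) (F₂ y)) atTop (nhds (F₂ y))) ∧
    (∀ x₁ x₂ y₁ y₂ : ℝ, x₁ ≤ x₂ → y₁ ≤ y₂ →
      0 ≤ C (F₁ x₂) (F₂ y₂) - C (F₁ x₁) (F₂ y₂) - C (F₁ x₂) (F₂ y₁)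
          + C (F₁ x₁) (F₂ y₁)) :=
  sklar_converse_general C hmarg₁ hmarg₂ hground₁ hground₂ hincr F₁ F₂ hF₁mono hF₂mono hF₁range
    hF₂range hF₁top hF₂top
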